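/- arXiv:2511.12399 — 4 statements merged into one kernel-verified Lean document; each statement's English description precedes it below -/
import Mathlib

section
/- Let (V, d_V) and (W, d_W) together with σ, τ, h be a contraction. Then W is the internal direct sum W = im(τ∘σ) ⊕ im(h∘d_W) ⊕ im(d_W∘h) of graded submodules, and im(τ∘σ) = ker(h∘d_W + d_W∘h). -/
/-!
The side conditions make `τ σ`, `h d` and `d h` pairwise orthogonal endomorphisms of `W`, and the
homotopy relation says that they sum to the identity; such a family consists of idempotents whose
ranges decompose `W`, and the range of the idempotent `τ σ` is the kernel of its complement
`id - τ σ = h d + d h`.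
-/

theorem CompleteOrthogonalIdempotents.isInternal_range {R M ι : Type*} [Ring R] [AddCommGroup M]
    [Module R M] [Fintype ι] [DecidableEq ι] {e : ι → Module.End R M}
    (he : CompleteOrthogonalIdempotents e) :
    DirectSum.IsInternal fun i => LinearMap.range (e i) := by
  refine DirectSum.isInternal_submodule_of_iSupIndep_of_iSup_eq_top (fun i => ?_) ?_
  · have hle : ⨆ (j) (_ : j ≠ i), LinearMap.range (e j) ≤ LinearMap.ker (e i) :=
      iSup₂_le fun j hj => LinearMap.range_le_ker_iff.mpr (he.ortho hj.symm)
    exact (LinearMap.IsIdempotentElem.isCompl (he.idem i)).disjoint.mono_right hle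
  · refine eq_top_iff.mpr fun x _ => ?_
    have hx : ∑ i, e i x = x := by
      simpa using congrArg (fun f : Module.End R M => f x) he.complete
    rw [← hx]
    exact Submodule.sum_mem _ fun i _ => Submodule.mem_iSup_of_mem i (LinearMap.mem_range_self _ x)

section Contraction

variable {R : Type*} [Ring R] {V W : ℤ → Type*}
  [∀ n, AddCommGroup (V n)] [∀ n, Module R (V n)] [∀ n, AddCommGroup (W n)] [∀ n, Module R (W n)]
  {dV : ∀ n : ℤ, V n →ₗ[R] V (n + 1)} {dW : ∀ n : ℤ, W n →ₗ[R] W (n + 1)}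
  {σ : ∀ n : ℤ, W n →ₗ[R] V n} {τ : ∀ n : ℤ, V n →ₗ[R] W n} {h : ∀ n : ℤ, W (n + 1) →ₗ[R] W n}

theorem completeOrthogonalIdempotents_of_contraction
    (dW_sq : ∀ n, (dW (n + 1)).comp (dW n) = 0)
    (σ_chain : ∀ n, (σ (n + 1)).comp (dW n) = (dV n).comp (σ n))
    (τ_chain : ∀ n, (dW n).comp (τ n) = (τ (n + 1)).comp (dV n))
    (side_homotopy : ∀ n,
      (LinearMap.id : W (n + 1) →ₗ[R] W (n + 1)) - (τ (n + 1)).comp (σ (n + 1))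
        = (h (n + 1)).comp (dW (n + 1)) + (dW n).comp (h n))
    (side_σh : ∀ n, (σ n).comp (h n) = 0)
    (side_hτ : ∀ n, (h n).comp (τ (n + 1)) = 0)
    (side_hh : ∀ n, (h n).comp (h (n + 1)) = 0) (n : ℤ) :
    CompleteOrthogonalIdempotents (![(τ (n + 1)).comp (σ (n + 1)), (h (n + 1)).comp (dW (n + 1)),
      (dW n).comp (h n)] : Fin 3 → Module.End R (W (n + 1))) := by
  rw [CompleteOrthogonalIdempotents.iff_ortho_complete]
  constructor
  · have σd : ∀ m (x : W m), σ (m + 1) (dW m x) = dV m (σ m x) :=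
      fun m => LinearMap.congr_fun (σ_chain m)
    have dτ : ∀ m (v : V m), dW m (τ m v) = τ (m + 1) (dV m v) :=
      fun m => LinearMap.congr_fun (τ_chain m)
    have dd : ∀ m (x : W m), dW (m + 1) (dW m x) = 0 := fun m => LinearMap.congr_fun (dW_sq m)
    have σh : ∀ m (x : W (m + 1)), σ m (h m x) = 0 := fun m => LinearMap.congr_fun (side_σh m)
    have hτ : ∀ m (v : V (m + 1)), h m (τ (m + 1) v) = 0 :=
      fun m => LinearMap.congr_fun (side_hτ m)
    have hh : ∀ m (x : W (m + 1 + 1)), h m (h (m + 1) x) = 0 :=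
      fun m => LinearMap.congr_fun (side_hh m)
    intro i j hij
    fin_cases i <;> fin_cases j <;> first | exact absurd rfl hij | ext x
    all_goals simp [σd, dτ, dd, σh, hτ, hh]
  · simp only [Fin.sum_univ_three, Matrix.cons_val]
    rw [add_assoc, ← side_homotopy, add_sub_cancel, Module.End.one_eq_id]

end Contraction

theorem contraction_direct_sum_decomposition_general
    (R : Type*) [CommRing R]
    (V W : ℤ → Type*)
    [∀ n, AddCommGroup (V n)] [∀ n, Module R (V n)]
    [∀ n, AddCommGroup (W n)] [∀ n, Module R (W n)]
    (dV : ∀ n : ℤ, V n →ₗ[R] V (n + 1))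
    (dW : ∀ n : ℤ, W n →ₗ[R] W (n + 1))
    (σ : ∀ n : ℤ, W n →ₗ[R] V n)
    (τ : ∀ n : ℤ, V n →ₗ[R] W n)
    (h : ∀ n : ℤ, W (n + 1) →ₗ[R] W n)
    (dW_sq : ∀ n, (dW (n + 1)).comp (dW n) = 0)
    (σ_chain : ∀ n, (σ (n + 1)).comp (dW n) = (dV n).comp (σ n))
    (τ_chain : ∀ n, (dW n).comp (τ n) = (τ (n + 1)).comp (dV n))
    (side_homotopy : ∀ n,
      (LinearMap.id : W (n + 1) →ₗ[R] W (n + 1)) - (τ (n + 1)).comp (σ (n + 1))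
        = (h (n + 1)).comp (dW (n + 1)) + (dW n).comp (h n))
    (side_σh : ∀ n, (σ n).comp (h n) = 0)
    (side_hτ : ∀ n, (h n).comp (τ (n + 1)) = 0)
    (side_hh : ∀ n, (h n).comp (h (n + 1)) = 0) :
    ∀ n : ℤ,
      DirectSum.IsInternal
        (![LinearMap.range ((τ (n + 1)).comp (σ (n + 1))),
           LinearMap.range ((h (n + 1)).comp (dW (n + 1))),
           LinearMap.range ((dW n).comp (h n))] : Fin 3 → Submodule R (W (n + 1))) ∧
      LinearMap.range ((τ (n + 1)).comp (σ (n + 1)))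
        = LinearMap.ker ((h (n + 1)).comp (dW (n + 1)) + (dW n).comp (h n)) := by
  intro n
  have he := completeOrthogonalIdempotents_of_contraction dW_sq σ_chain τ_chain side_homotopy
    side_σh side_hτ side_hh n
  constructor
  · convert he.isInternal_range using 1
    funext i
    fin_cases i <;> rfl
  · rw [← side_homotopy n]
    exact LinearMap.IsIdempotentElem.range_eq_ker (he.idem 0)

/-- In any contraction, `W` is the internal direct sum
`W = im(τ∘σ) ⊕ im(h∘dW) ⊕ im(dW∘h)` of graded submodules, and
`im(τ∘σ) = ker(h∘dW + dW∘h)`.  (Stated at every degree `n + 1`.) -/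
theorem contraction_direct_sum_decomposition
    (R : Type*) [CommRing R]
    (V W : ℤ → Type*)
    [∀ n, AddCommGroup (V n)] [∀ n, Module R (V n)]
    [∀ n, AddCommGroup (W n)] [∀ n, Module R (W n)]
    (dV : ∀ n : ℤ, V n →ₗ[R] V (n + 1))
    (dW : ∀ n : ℤ, W n →ₗ[R] W (n + 1))
    (σ : ∀ n : ℤ, W n →ₗ[R] V n)
    (τ : ∀ n : ℤ, V n →ₗ[R] W n)
    (h : ∀ n : ℤ, W (n + 1) →ₗ[R] W n)
    (dV_sq : ∀ n, (dV (n + 1)).comp (dV n) = 0)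
    (dW_sq : ∀ n, (dW (n + 1)).comp (dW n) = 0)
    (σ_chain : ∀ n, (σ (n + 1)).comp (dW n) = (dV n).comp (σ n))
    (τ_chain : ∀ n, (dW n).comp (τ n) = (τ (n + 1)).comp (dV n))
    (side_στ : ∀ n, (σ n).comp (τ n) = LinearMap.id)
    (side_homotopy : ∀ n,
      (LinearMap.id : W (n + 1) →ₗ[R] W (n + 1)) - (τ (n + 1)).comp (σ (n + 1))
        = (h (n + 1)).comp (dW (n + 1)) + (dW n).comp (h n))
    (side_σh : ∀ n, (σ n).comp (h n) = 0)
    (side_hτ : ∀ n, (h n).comp (τ (n + 1)) = 0)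
    (side_hh : ∀ n, (h n).comp (h (n + 1)) = 0) :
    ∀ n : ℤ,
      DirectSum.IsInternal
        (![LinearMap.range ((τ (n + 1)).comp (σ (n + 1))),
           LinearMap.range ((h (n + 1)).comp (dW (n + 1))),
           LinearMap.range ((dW n).comp (h n))] : Fin 3 → Submodule R (W (n + 1))) ∧
      LinearMap.range ((τ (n + 1)).comp (σ (n + 1)))
        = LinearMap.ker ((h (n + 1)).comp (dW (n + 1)) + (dW n).comp (h n)) :=
  contraction_direct_sum_decomposition_general R V W dV dW σ τ h dW_sq σ_chain τ_chain side_homotopy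
    side_σh side_hτ side_hh
end

section
/- Let W be a ℤ-graded module over a commutative ring R with R-linear maps d : W → W of degree +1 and h : W → W of degree −1 satisfying d∘d = 0, h∘h = 0 and h∘d∘h = h. Set V := ker(h∘d + d∘h) and π := id_W − (h∘d + d∘h). Then: V is a graded submodule of W stable under d; h(v) = 0 for every v ∈ V; π is idempotent with image V and commutes with d; and the inclusion τ : V ↪ W, the corestriction σ : W → V of π, and h constitute a contraction of (W, d) onto (V, d|_V), i.e. the five side conditions σ∘τ = id_V, id_W − τ∘σ = h∘d + d∘h, σ∘h = 0, h∘τ = 0, h∘h = 0 hold. -/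
/-- Given a cochain complex `(W, dW)` and a degree `-1` map `h` with
`h∘h = 0` and `h∘dW∘h = h`, set `P := h∘dW + dW∘h`, `V := ker P` and `π := id - P`.
Then `V` is a graded subcomplex (stable under `dW`), `h` vanishes on `V`, `π` is an
idempotent with image `V` commuting with `dW`, and the inclusion `τ = V.subtype`,
the corestriction `σ` of `π` and `h` constitute a contraction of `(W, dW)` onto
`(V, dW|_V)`, i.e. the five side conditions hold. -/
theorem contraction_from_special_deformation_retract_data
    (R : Type*) [CommRing R]
    (W : ℤ → Type*) [∀ n, AddCommGroup (W n)] [∀ n, Module R (W n)]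
    (dW : ∀ n : ℤ, W n →ₗ[R] W (n + 1))
    (h : ∀ n : ℤ, W (n + 1) →ₗ[R] W n)
    (dW_sq : ∀ n, (dW (n + 1)).comp (dW n) = 0)
    (side_hh : ∀ n, (h n).comp (h (n + 1)) = 0)
    (side_hdh : ∀ n, (h n).comp ((dW n).comp (h n)) = h n) :
    let P : ∀ n : ℤ, W (n + 1) →ₗ[R] W (n + 1) :=
      fun n => (h (n + 1)).comp (dW (n + 1)) + (dW n).comp (h n)
    let K : ∀ n : ℤ, Submodule R (W (n + 1)) := fun n => LinearMap.ker (P n)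
    let π : ∀ n : ℤ, W (n + 1) →ₗ[R] W (n + 1) := fun n => LinearMap.id - P n
    -- V = K is stable under the differential
    (∀ n, ∀ x ∈ K n, dW (n + 1) x ∈ K (n + 1)) ∧
    -- h vanishes on V
    (∀ n, ∀ x ∈ K n, h n x = 0) ∧
    -- π is idempotent with image V and commutes with d
    (∀ n, (π n).comp (π n) = π n) ∧
    (∀ n, LinearMap.range (π n) = K n) ∧
    (∀ n, (π (n + 1)).comp (dW (n + 1)) = (dW (n + 1)).comp (π n)) ∧
    -- the inclusion τ, the corestriction σ of π, and h form a contraction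
    (∃ (σ : ∀ n : ℤ, W (n + 1) →ₗ[R] K n) (dK : ∀ n : ℤ, (K n : Type _) →ₗ[R] K (n + 1)),
      -- σ is the corestriction of π, dK the restriction of dW
      (∀ n, (K n).subtype.comp (σ n) = π n) ∧
      (∀ n, (K (n + 1)).subtype.comp (dK n) = (dW (n + 1)).comp ((K n).subtype)) ∧
      (∀ n, (dK (n + 1)).comp (dK n) = 0) ∧
      -- chain map conditions
      (∀ n, (σ (n + 1)).comp (dW (n + 1)) = (dK n).comp (σ n)) ∧
      -- the five side conditions
      (∀ n, (σ n).comp ((K n).subtype) = LinearMap.id) ∧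
      (∀ n, (LinearMap.id : W (n + 1) →ₗ[R] W (n + 1)) - ((K n).subtype).comp (σ n)
          = (h (n + 1)).comp (dW (n + 1)) + (dW n).comp (h n)) ∧
      (∀ n, (σ n).comp (h (n + 1)) = 0) ∧
      (∀ n, (h n).comp ((K n).subtype) = 0) ∧
      (∀ n, (h n).comp (h (n + 1)) = 0)) := by
  intro P K π
  -- pointwise versions of hypotheses
  have hh : ∀ n x, h n (h (n + 1) x) = 0 := fun n x => by
    simpa using LinearMap.ext_iff.mp (side_hh n) x
  have hdh : ∀ n x, h n (dW n (h n x)) = h n x := fun n x => by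
    simpa using LinearMap.ext_iff.mp (side_hdh n) x
  have dd : ∀ n x, dW (n + 1) (dW n x) = 0 := fun n x => by
    simpa using LinearMap.ext_iff.mp (dW_sq n) x
  have Pdef : ∀ n x, P n x = h (n + 1) (dW (n + 1) x) + dW n (h n x) := fun n x => rfl
  -- h ∘ P = h
  have hP : ∀ n x, h n (P n x) = h n x := by
    intro n x
    simp [Pdef, hh, hdh]
  -- P ∘ h = h
  have Ph : ∀ n x, P n (h (n + 1) x) = h (n + 1) x := by
    intro n x
    simp [Pdef, hh, hdh]
  -- P commutes with d
  have Pd : ∀ n x, P (n + 1) (dW (n + 1) x) = dW (n + 1) (P n x) := by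
    intro n x
    simp [Pdef, dd, hdh]
  -- P idempotent
  have PP : ∀ n x, P n (P n x) = P n x := by
    intro n x
    rw [Pdef n x, map_add, Ph]
    have : P n (dW n (h n x)) = dW n (h n x) := by
      simp [Pdef, dd, hdh]
    rw [this, ← Pdef]
  have πdef : ∀ n x, π n x = x - P n x := fun n x => rfl
  have memK : ∀ n x, x ∈ K n ↔ P n x = 0 := fun n x => LinearMap.mem_ker
  have stab : ∀ n, ∀ x ∈ K n, dW (n + 1) x ∈ K (n + 1) := by
    intro n x hx
    rw [memK] at hx ⊢
    rw [Pd, hx, map_zero]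
  have πmem : ∀ n x, π n x ∈ K n := by
    intro n x
    rw [memK, πdef, map_sub, PP, sub_self]
  refine ⟨stab, ?_, ?_, ?_, ?_, ?_⟩
  · intro n x hx
    rw [memK] at hx
    have := hP n x
    rw [hx, map_zero] at this
    exact this.symm
  · intro n
    ext x
    simp [πdef, map_sub, PP]
  · intro n
    apply le_antisymm
    · rintro _ ⟨x, rfl⟩
      exact πmem n x
    · intro x hx
      rw [memK] at hx
      exact ⟨x, by rw [πdef, hx, sub_zero]⟩
  · intro n
    ext x
    simp [πdef, map_sub, Pd]
  · refine ⟨fun n => LinearMap.codRestrict (K n) (π n) (πmem n),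
      fun n => (dW (n + 1)).restrict (stab n), ?_, ?_, ?_, ?_, ?_, ?_, ?_, ?_, ?_⟩
    · intro n; ext x; rfl
    · intro n; ext x; rfl
    · intro n
      ext ⟨x, hx⟩
      simp [LinearMap.restrict_apply, dd]
    · intro n
      ext x
      show π (n + 1) (dW (n + 1) x) = dW (n + 1) (π n x)
      simp [πdef, map_sub, Pd]
    · intro n
      ext ⟨x, hx⟩
      show π n x = x
      rw [memK] at hx
      rw [πdef, hx, sub_zero]
    · intro n
      ext x
      show x - π n x = P n x
      rw [πdef, sub_sub_cancel]
    · intro n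
      ext x
      show π n (h (n + 1) x) = 0
      rw [πdef, Ph, sub_self]
    · intro n
      ext ⟨x, hx⟩
      rw [memK] at hx
      have := hP n x
      rw [hx, map_zero] at this
      exact this.symm
    · exact side_hh
end

section
/- (Homological Perturbation Lemma.) Let (V, d_V), (W, d_W), σ, τ, h be a contraction and let ϱ be a small perturbation of this contraction, with ϱ̆ := ϱ∘(id_W − h∘ϱ)^{-1}. Then: (a) (d_V − σ∘ϱ̆∘τ)² = 0, so that σ∘ϱ̆∘τ is a perturbation of the cochain complex (V, d_V); and (b) the maps σ_ϱ := σ∘(id_W + ϱ̆∘h), τ_ϱ := (id_W + h∘ϱ̆)∘τ and h_ϱ := h + h∘ϱ̆∘h form a contraction of (W, d_W − ϱ) onto (V, d_V − σ∘ϱ̆∘τ): σ_ϱ and τ_ϱ are chain maps for the perturbed differentials, and σ_ϱ∘τ_ϱ = id_V, id_W − τ_ϱ∘σ_ϱ = h_ϱ∘(d_W − ϱ) + (d_W − ϱ)∘h_ϱ, σ_ϱ∘h_ϱ = 0, h_ϱ∘τ_ϱ = 0, h_ϱ∘h_ϱ = 0. -/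
set_option maxHeartbeats 4000000 in
/-- Homological Perturbation Lemma: Let `(V,dV) ⇄ (W,dW)` with
`σ, τ, h` be a contraction and `ρ` a small perturbation (with respect to an
exhaustive complete increasing filtration `F`).  Then `id - h∘ρ` is invertible;
writing `B` for its two-sided inverse and `ρ̆ := ρ∘B`, the operator `σ∘ρ̆∘τ` is a
perturbation of `(V, dV)`, and `σ_ρ := σ∘(id + ρ̆∘h)`, `τ_ρ := (id + h∘ρ̆)∘τ`,
`h_ρ := h + h∘ρ̆∘h` form a contraction of `(W, dW - ρ)` onto `(V, dV - σ∘ρ̆∘τ)`. -/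
theorem homological_perturbation_lemma
    (R : Type*) [CommRing R]
    (V W : ℤ → Type*)
    [∀ n, AddCommGroup (V n)] [∀ n, Module R (V n)]
    [∀ n, AddCommGroup (W n)] [∀ n, Module R (W n)]
    (dV : ∀ n : ℤ, V n →ₗ[R] V (n + 1))
    (dW : ∀ n : ℤ, W n →ₗ[R] W (n + 1))
    (σ : ∀ n : ℤ, W n →ₗ[R] V n)
    (τ : ∀ n : ℤ, V n →ₗ[R] W n)
    (h : ∀ n : ℤ, W (n + 1) →ₗ[R] W n)
    (dV_sq : ∀ n, (dV (n + 1)).comp (dV n) = 0)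
    (dW_sq : ∀ n, (dW (n + 1)).comp (dW n) = 0)
    (σ_chain : ∀ n, (σ (n + 1)).comp (dW n) = (dV n).comp (σ n))
    (τ_chain : ∀ n, (dW n).comp (τ n) = (τ (n + 1)).comp (dV n))
    (side_στ : ∀ n, (σ n).comp (τ n) = LinearMap.id)
    (side_homotopy : ∀ n,
      (LinearMap.id : W (n + 1) →ₗ[R] W (n + 1)) - (τ (n + 1)).comp (σ (n + 1))
        = (h (n + 1)).comp (dW (n + 1)) + (dW n).comp (h n))
    (side_σh : ∀ n, (σ n).comp (h n) = 0)
    (side_hτ : ∀ n, (h n).comp (τ (n + 1)) = 0)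
    (side_hh : ∀ n, (h n).comp (h (n + 1)) = 0)
    (ρ : ∀ n : ℤ, W n →ₗ[R] W (n + 1))
    (perturbed_sq : ∀ n, (dW (n + 1) - ρ (n + 1)).comp (dW n - ρ n) = 0)
    (F : ℤ → ∀ n : ℤ, Submodule R (W n))
    (F_mono : ∀ m m' : ℤ, m ≤ m' → ∀ n, F m n ≤ F m' n)
    (F_exhaustive : ∀ (n : ℤ) (x : W n), ∃ m : ℤ, x ∈ F m n)
    (F_separated : ∀ (n : ℤ) (x : W n), (∀ m : ℤ, x ∈ F m n) → x = 0)
    (F_complete : ∀ (n : ℤ) (c : ℤ → W n),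
      (∀ m m' : ℤ, m ≤ m' → c m - c m' ∈ F m' n) → ∃ w : W n, ∀ m : ℤ, w - c m ∈ F m n)
    (small : ∀ (m n : ℤ), ∀ x ∈ F m n, h n (ρ n x) ∈ F (m - 1) n) :
    -- id - h∘ρ admits a two-sided inverse B (in each degree)
    (∃ B : ∀ n : ℤ, W n →ₗ[R] W n, ∀ n,
        (LinearMap.id - (h n).comp (ρ n)).comp (B n) = LinearMap.id ∧
        (B n).comp (LinearMap.id - (h n).comp (ρ n)) = LinearMap.id) ∧
    -- and for any such inverse B, with ρ̆ := ρ∘B, the perturbed data is a contraction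
    (∀ B : ∀ n : ℤ, W n →ₗ[R] W n,
      (∀ n, (LinearMap.id - (h n).comp (ρ n)).comp (B n) = LinearMap.id ∧
        (B n).comp (LinearMap.id - (h n).comp (ρ n)) = LinearMap.id) →
      (let ρb : ∀ n : ℤ, W n →ₗ[R] W (n + 1) := fun n => (ρ n).comp (B n)
       let dVp : ∀ n : ℤ, V n →ₗ[R] V (n + 1) :=
         fun n => dV n - (σ (n + 1)).comp ((ρb n).comp (τ n))
       let σp : ∀ n : ℤ, W (n + 1) →ₗ[R] V (n + 1) :=
         fun n => (σ (n + 1)).comp (LinearMap.id + (ρb n).comp (h n))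
       let τp : ∀ n : ℤ, V n →ₗ[R] W n :=
         fun n => (LinearMap.id + (h n).comp (ρb n)).comp (τ n)
       let hp : ∀ n : ℤ, W (n + 1) →ₗ[R] W n :=
         fun n => h n + ((h n).comp (ρb n)).comp (h n)
       -- (a) σ∘ρ̆∘τ is a perturbation of (V, dV)
       (∀ n, (dVp (n + 1)).comp (dVp n) = 0) ∧
       -- (b) perturbed chain maps
       (∀ n, (σp (n + 1)).comp (dW (n + 1) - ρ (n + 1)) = (dVp (n + 1)).comp (σp n)) ∧
       (∀ n, (dW n - ρ n).comp (τp n) = (τp (n + 1)).comp (dVp n)) ∧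
       -- perturbed side conditions
       (∀ n, (σp n).comp (τp (n + 1)) = LinearMap.id) ∧
       (∀ n, (LinearMap.id : W (n + 1) →ₗ[R] W (n + 1)) - (τp (n + 1)).comp (σp n)
           = (hp (n + 1)).comp (dW (n + 1) - ρ (n + 1)) + (dW n - ρ n).comp (hp n)) ∧
       (∀ n, (σp n).comp (hp (n + 1)) = 0) ∧
       (∀ n, (hp n).comp (τp (n + 1)) = 0) ∧
       (∀ n, (hp n).comp (hp (n + 1)) = 0))) := by
  classical
  -- pointwise forms of hypotheses
  have hστ : ∀ (n : ℤ) (x : V n), σ n (τ n x) = x := fun n x => by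
    simpa using DFunLike.congr_fun (side_στ n) x
  have hσh : ∀ (n : ℤ) (x : W (n + 1)), σ n (h n x) = 0 := fun n x => by
    simpa using DFunLike.congr_fun (side_σh n) x
  have hhτ : ∀ (n : ℤ) (x : V (n + 1)), h n (τ (n + 1) x) = 0 := fun n x => by
    simpa using DFunLike.congr_fun (side_hτ n) x
  have hhh : ∀ (n : ℤ) (x : W (n + 1 + 1)), h n (h (n + 1) x) = 0 := fun n x => by
    simpa using DFunLike.congr_fun (side_hh n) x
  have hdσ : ∀ (n : ℤ) (x : W n), dV n (σ n x) = σ (n + 1) (dW n x) := fun n x => by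
    simpa using (DFunLike.congr_fun (σ_chain n) x).symm
  have hDτ : ∀ (n : ℤ) (x : V n), dW n (τ n x) = τ (n + 1) (dV n x) := fun n x => by
    simpa using DFunLike.congr_fun (τ_chain n) x
  have hdV : ∀ (n : ℤ) (x : V n), dV (n + 1) (dV n x) = 0 := fun n x => by
    simpa using DFunLike.congr_fun (dV_sq n) x
  have hdW : ∀ (n : ℤ) (x : W n), dW (n + 1) (dW n x) = 0 := fun n x => by
    simpa using DFunLike.congr_fun (dW_sq n) x
  have hτσ : ∀ (n : ℤ) (z : W (n + 1)),
      τ (n + 1) (σ (n + 1) z) = z - h (n + 1) (dW (n + 1) z) - dW n (h n z) := by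
    intro n z
    have h1 := DFunLike.congr_fun (side_homotopy n) z
    simp only [LinearMap.sub_apply, LinearMap.add_apply, LinearMap.comp_apply,
      LinearMap.id_apply] at h1
    have h2 : τ (n + 1) (σ (n + 1) z)
        = z - (h (n + 1) (dW (n + 1) z) + dW n (h n z)) := by
      rw [← h1]; abel
    rw [h2]; abel
  have hP : ∀ (n : ℤ) (z : W n),
      ρ (n + 1) (ρ n z) = dW (n + 1) (ρ n z) + ρ (n + 1) (dW n z) := by
    intro n z
    have h1 := DFunLike.congr_fun (perturbed_sq n) z
    simp only [LinearMap.comp_apply, LinearMap.sub_apply, LinearMap.zero_apply,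
      map_sub, hdW] at h1
    have h2 : ρ (n + 1) (ρ n z) - (dW (n + 1) (ρ n z) + ρ (n + 1) (dW n z))
        = 0 - ρ (n + 1) (dW n z) - (dW (n + 1) (ρ n z) - ρ (n + 1) (ρ n z)) := by abel
    rw [h1] at h2
    exact sub_eq_zero.mp h2
  -- bijectivity of id - h∘ρ
  have bij : ∀ n : ℤ, Function.Bijective
      ⇑(LinearMap.id - (h n).comp (ρ n) : W n →ₗ[R] W n) := by
    intro n
    have hfx : ∀ x : W n, (LinearMap.id - (h n).comp (ρ n) : W n →ₗ[R] W n) x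
        = x - h n (ρ n x) := fun x => by
      simp [LinearMap.sub_apply]
    have hker : ∀ w : W n, w = h n (ρ n w) → w = 0 := by
      intro w hw
      obtain ⟨m0, hm0⟩ := F_exhaustive n w
      have step : ∀ k : ℕ, w ∈ F (m0 - k) n := by
        intro k
        induction k with
        | zero => simpa using hm0
        | succ k ih =>
          have h2 := small (m0 - k) n w ih
          rw [← hw] at h2
          have e : (m0 - (k + 1 : ℕ) : ℤ) = m0 - (k : ℕ) - 1 := by push_cast; ring
          rw [e]; exact h2
      apply F_separated
      intro m
      have hk : (m0 - ((m0 - m).toNat : ℤ)) ≤ m := by omega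
      exact F_mono _ _ hk n (step (m0 - m).toNat)
    constructor
    · intro a b hab
      have h3 : a - h n (ρ n a) = b - h n (ρ n b) := by
        rw [← hfx, ← hfx]; exact hab
      have h4 : a - b = h n (ρ n (a - b)) := by
        have h5 : (a - b) - h n (ρ n (a - b)) = 0 := by
          rw [map_sub (ρ n), map_sub (h n)]
          calc a - b - (h n (ρ n a) - h n (ρ n b))
              = (a - h n (ρ n a)) - (b - h n (ρ n b)) := by abel
            _ = 0 := by rw [h3]; abel
        exact sub_eq_zero.mp h5
      have h6 := hker (a - b) h4
      exact sub_eq_zero.mp h6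
    · intro x
      obtain ⟨m0, hm0⟩ := F_exhaustive n x
      let iter : ℕ → W n := fun k => (fun y => h n (ρ n y))^[k] x
      have iter_zero : iter 0 = x := rfl
      have iter_succ : ∀ k, iter (k + 1) = h n (ρ n (iter k)) := fun k =>
        Function.iterate_succ_apply' _ k x
      have iter_mem : ∀ k : ℕ, iter k ∈ F (m0 - k) n := by
        intro k
        induction k with
        | zero => simpa [iter_zero] using hm0
        | succ k ih =>
          rw [iter_succ]
          have h2 := small (m0 - k) n _ ih
          have e : (m0 - (k + 1 : ℕ) : ℤ) = m0 - (k : ℕ) - 1 := by push_cast; ring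
          rw [e]; exact h2
      let s : ℕ → W n := fun k => ∑ j ∈ Finset.range k, iter j
      have s_def : ∀ k, s k = ∑ j ∈ Finset.range k, iter j := fun k => rfl
      have hs_diff : ∀ a b : ℕ, b ≤ a → s a - s b = ∑ j ∈ Finset.Ico b a, iter j := by
        intro a b hba
        rw [s_def, s_def, Finset.sum_Ico_eq_sub (fun j => iter j) hba]
      have hdiff_mem : ∀ (a b : ℕ) (m' : ℤ), b ≤ a → m0 - (b : ℤ) ≤ m' →
          s a - s b ∈ F m' n := by
        intro a b m' hba hbm
        rw [hs_diff a b hba]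
        refine Submodule.sum_mem _ fun j hj => ?_
        have hj' := Finset.mem_Ico.mp hj
        refine F_mono (m0 - j) m' (by omega) n (iter_mem j)
      let c : ℤ → W n := fun m => s (m0 - m).toNat
      have hc : ∀ m m' : ℤ, m ≤ m' → c m - c m' ∈ F m' n := by
        intro m m' hmm'
        refine hdiff_mem _ _ _ ?_ ?_ <;> omega
      obtain ⟨w, hw⟩ := F_complete n c hc
      have fs : ∀ k : ℕ, (LinearMap.id - (h n).comp (ρ n) : W n →ₗ[R] W n) (s k
          ) = x - iter k := by
        intro k
        induction k with
        | zero => simp [s_def, iter_zero]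
        | succ k ih =>
          have hsucc : s (k + 1) = s k + iter k := by
            rw [s_def, s_def, Finset.sum_range_succ]
          rw [hsucc, map_add, ih, hfx, iter_succ]
          abel
      refine ⟨w, ?_⟩
      have hmem : ∀ m : ℤ,
          (LinearMap.id - (h n).comp (ρ n) : W n →ₗ[R] W n) w - x ∈ F m n := by
        intro m
        set k := (m0 - m).toNat with hk
        have hcm : c m = s k := rfl
        have h1 : (LinearMap.id - (h n).comp (ρ n) : W n →ₗ[R] W n) w - x
            = ((w - c m) - h n (ρ n (w - c m))) - iter k := by
          have h2 : ((w - c m) - h n (ρ n (w - c m)))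
              = (LinearMap.id - (h n).comp (ρ n) : W n →ₗ[R] W n) (w - c m) :=
            (hfx _).symm
          rw [h2, map_sub, hcm, fs k]
          abel
        rw [h1]
        have m1 : (w - c m) - h n (ρ n (w - c m)) ∈ F m n := by
          have a1 : w - c m ∈ F m n := hw m
          have a2 : h n (ρ n (w - c m)) ∈ F (m - 1) n := small m n _ a1
          exact sub_mem a1 (F_mono (m - 1) m (by omega) n a2)
        have m2 : iter k ∈ F m n :=
          F_mono (m0 - (k : ℤ)) m (by omega) n (iter_mem k)
        exact sub_mem m1 m2
      have h0 := F_separated n _ hmem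
      exact sub_eq_zero.mp h0
  constructor
  · refine ⟨fun n =>
      (LinearEquiv.ofBijective (LinearMap.id - (h n).comp (ρ n)) (bij n)).symm.toLinearMap,
      fun n => ⟨?_, ?_⟩⟩
    · ext x
      simpa using
        (LinearEquiv.ofBijective (LinearMap.id - (h n).comp (ρ n)) (bij n)).apply_symm_apply x
    · ext x
      simpa using
        (LinearEquiv.ofBijective (LinearMap.id - (h n).comp (ρ n)) (bij n)).symm_apply_apply x
  · intro B hB
    have hBa : ∀ (n : ℤ) (z : W n), h n (ρ n (B n z)) = B n z - z := by
      intro n z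
      have h1 := DFunLike.congr_fun (hB n).1 z
      simp only [LinearMap.comp_apply, LinearMap.sub_apply, LinearMap.id_apply] at h1
      exact sub_right_inj.mp (h1.trans (sub_sub_cancel (B n z) z).symm)
    have hBb : ∀ (n : ℤ) (z : W n), B n (h n (ρ n z)) = B n z - z := by
      intro n z
      have h1 := DFunLike.congr_fun (hB n).2 z
      simp only [LinearMap.comp_apply, LinearMap.sub_apply, LinearMap.id_apply,
        map_sub] at h1
      exact sub_right_inj.mp (h1.trans (sub_sub_cancel (B n z) z).symm)
    have hσB : ∀ (n : ℤ) (z : W n), σ n (B n z) = σ n z := by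
      intro n z
      have h1 : σ n (B n z) - σ n z = 0 := by
        rw [← map_sub, ← hBa n z, hσh]
      exact sub_eq_zero.mp h1
    have hhB : ∀ (n : ℤ) (z : W (n + 1)), h n (B (n + 1) z) = h n z := by
      intro n z
      have h1 : h n (B (n + 1) z) - h n z = 0 := by
        rw [← map_sub, ← hBa (n + 1) z, hhh]
      exact sub_eq_zero.mp h1
    have hBDB : ∀ (n : ℤ) (z : W n),
        B (n + 1) (dW n (B n z)) = dW n (B n z) + B (n + 1) (ρ n (B n z))
          - ρ n (B n z) - B (n + 1) (h (n + 1) (dW (n + 1) (ρ n (B n z)))) := by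
      intro n z
      have e1 : B (n + 1) (dW n (B n z))
          = dW n (B n z) + B (n + 1) (h (n + 1) (ρ (n + 1) (dW n (B n z)))) := by
        rw [hBb]; abel
      have e2 : ρ (n + 1) (dW n (B n z))
          = ρ (n + 1) (ρ n (B n z)) - dW (n + 1) (ρ n (B n z)) := by
        rw [hP]; abel
      rw [e1, e2, map_sub, map_sub, hBb]
      abel
    intro ρb dVp σp τp hp
    have ρb_def : ∀ (n : ℤ) (z : W n), ρb n z = ρ n (B n z) := fun n z => rfl
    have dVp_def : ∀ (n : ℤ) (z : V n),
        dVp n z = dV n z - σ (n + 1) (ρ n (B n (τ n z))) := fun n z => rfl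
    have σp_def : ∀ (n : ℤ) (z : W (n + 1)),
        σp n z = σ (n + 1) (z + ρ n (B n (h n z))) := fun n z => rfl
    have τp_def : ∀ (n : ℤ) (z : V n),
        τp n z = τ n z + h n (ρ n (B n (τ n z))) := fun n z => rfl
    have hp_def : ∀ (n : ℤ) (z : W (n + 1)),
        hp n z = h n z + h n (ρ n (B n (h n z))) := fun n z => rfl
    refine ⟨fun n => ?_, fun n => ?_, fun n => ?_, fun n => ?_, fun n => ?_,
      fun n => ?_, fun n => ?_, fun n => ?_⟩ <;>
    · refine LinearMap.ext fun x => ?_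
      simp only [hp_def, τp_def, σp_def, dVp_def, ρb_def, LinearMap.comp_apply,
        LinearMap.sub_apply, LinearMap.add_apply, LinearMap.id_apply,
        LinearMap.zero_apply, map_add, map_sub, map_zero,
        hστ, hσh, hhτ, hhh, hdσ, hDτ, hdV, hdW, hτσ, hBa, hBb, hσB, hhB, hBDB, hP]
      first
      | rfl
      | abel
end

section
/- In any calculus (Θ, Ξ, ι, d), the assignment X ↦ L_X defines a graded Lie algebra action of the shifted graded Lie algebra Θ[1] on Ξ: for all homogeneous X, Y ∈ Θ, L_{[X,Y]} = L_X ∘ L_Y − (−1)^{(|X|−1)(|Y|−1)} L_Y ∘ L_X. (Thus axiom (iii) in the Tamarkin–Tsygan definition of a calculus, requiring Ξ to be a graded Lie module over Θ[1] via L, is redundant: it follows automatically from the remaining axioms.) -/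
/-- Transport along an equality of degrees. -/
def gcast (K : Type*) [Field K] (A : ℤ → Type*)
    [∀ i, AddCommGroup (A i)] [∀ i, Module K (A i)] :
    ∀ {p q : ℤ}, p = q → A p →ₗ[K] A q
  | _, _, rfl => LinearMap.id

/-- The Lie derivative `L_X := ι_X ∘ d - (-1)^{|X|} d ∘ ι_X` (Cartan formula),
an operator of degree `|X| - 1` on `Ξ`. -/
def LL {K : Type*} [Field K]
    {Θ : ℤ → Type*} [∀ p, AddCommGroup (Θ p)] [∀ p, Module K (Θ p)]
    {Ξ : ℤ → Type*} [∀ n, AddCommGroup (Ξ n)] [∀ n, Module K (Ξ n)]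
    (ι : ∀ p n : ℤ, Θ p →ₗ[K] Ξ n →ₗ[K] Ξ (n + p))
    (d : ∀ n : ℤ, Ξ n →ₗ[K] Ξ (n - 1))
    (p n : ℤ) (X : Θ p) : Ξ n →ₗ[K] Ξ (n + p - 1) :=
  (gcast K Ξ (show n - 1 + p = n + p - 1 by ring)).comp ((ι p (n - 1) X).comp (d n))
    - ((-1 : K) ^ p) • ((d (n + p)).comp (ι p n X))

section Aux

variable {K : Type*} [Field K] {A : ℤ → Type*}
    [∀ i, AddCommGroup (A i)] [∀ i, Module K (A i)]

lemma gcast_rfl' {p : ℤ} (h : p = p) (x : A p) : gcast K A h x = x := rfl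

lemma gcast_gcast' {p q r : ℤ} (h1 : p = q) (h2 : q = r) (x : A p) :
    gcast K A h2 (gcast K A h1 x) = gcast K A (h1.trans h2) x := by
  subst h1; subst h2; rfl

lemma neg_one_zpow_ite (a : ℤ) :
    ((-1 : K) ^ a) = if Even a then 1 else -1 := by
  split
  · exact Even.neg_one_zpow ‹_›
  · exact Odd.neg_one_zpow (Int.not_even_iff_odd.mp ‹_›)

end Aux

/-- In any calculus `(Θ, Ξ, ι, d)`, the assignment `X ↦ L_X` defines
a graded Lie algebra action of `Θ[1]` on `Ξ`:
`L_{[X,Y]} = L_X ∘ L_Y - (-1)^{(|X|-1)(|Y|-1)} L_Y ∘ L_X`.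
(Thus axiom (iii) of Tamarkin–Tsygan is redundant.) -/
theorem calculus_lie_module_structure_automatic
    (K : Type*) [Field K]
    (Θ : ℤ → Type*) [∀ p, AddCommGroup (Θ p)] [∀ p, Module K (Θ p)]
    (Ξ : ℤ → Type*) [∀ n, AddCommGroup (Ξ n)] [∀ n, Module K (Ξ n)]
    (mul : ∀ p q : ℤ, Θ p →ₗ[K] Θ q →ₗ[K] Θ (p + q))
    (one : Θ 0)
    (br : ∀ p q : ℤ, Θ p →ₗ[K] Θ q →ₗ[K] Θ (p + q - 1))
    (ι : ∀ p n : ℤ, Θ p →ₗ[K] Ξ n →ₗ[K] Ξ (n + p))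
    (d : ∀ n : ℤ, Ξ n →ₗ[K] Ξ (n - 1))
    (mul_assoc : ∀ (p q r : ℤ) (X : Θ p) (Y : Θ q) (Z : Θ r),
      mul (p + q) r (mul p q X Y) Z
        = gcast K Θ (show p + (q + r) = p + q + r by ring) (mul p (q + r) X (mul q r Y Z)))
    (mul_gcomm : ∀ (p q : ℤ) (X : Θ p) (Y : Θ q),
      mul p q X Y
        = ((-1 : K) ^ (p * q)) • gcast K Θ (show q + p = p + q by ring) (mul q p Y X))
    (one_mul : ∀ (p : ℤ) (X : Θ p),
      gcast K Θ (show (0 : ℤ) + p = p by ring) (mul 0 p one X) = X)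
    (br_skew : ∀ (p q : ℤ) (X : Θ p) (Y : Θ q),
      br p q X Y
        = -(((-1 : K) ^ ((p - 1) * (q - 1))) •
            gcast K Θ (show q + p - 1 = p + q - 1 by ring) (br q p Y X)))
    (br_jacobi : ∀ (p q r : ℤ) (X : Θ p) (Y : Θ q) (Z : Θ r),
      br p (q + r - 1) X (br q r Y Z)
        = gcast K Θ (show p + q - 1 + r - 1 = p + (q + r - 1) - 1 by ring)
            (br (p + q - 1) r (br p q X Y) Z)
          + ((-1 : K) ^ ((p - 1) * (q - 1))) •
              gcast K Θ (show q + (p + r - 1) - 1 = p + (q + r - 1) - 1 by ring)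
                (br q (p + r - 1) Y (br p r X Z)))
    (leibniz : ∀ (p q r : ℤ) (X : Θ p) (Y : Θ q) (Z : Θ r),
      br p (q + r) X (mul q r Y Z)
        = gcast K Θ (show p + q - 1 + r = p + (q + r) - 1 by ring)
            (mul (p + q - 1) r (br p q X Y) Z)
          + ((-1 : K) ^ ((p - 1) * q)) •
              gcast K Θ (show q + (p + r - 1) = p + (q + r) - 1 by ring)
                (mul q (p + r - 1) Y (br p r X Z)))
    (ι_mul : ∀ (p q n : ℤ) (X : Θ p) (Y : Θ q) (ξ : Ξ n),
      ι (p + q) n (mul p q X Y) ξ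
        = gcast K Ξ (show n + q + p = n + (p + q) by ring) (ι p (n + q) X (ι q n Y ξ)))
    (ι_one : ∀ (n : ℤ) (ξ : Ξ n), gcast K Ξ (show n + (0 : ℤ) = n by ring) (ι 0 n one ξ) = ξ)
    (d_sq : ∀ n : ℤ, (d (n - 1)).comp (d n) = 0)
    (ι_br : ∀ (p q n : ℤ) (X : Θ p) (Y : Θ q) (ξ : Ξ n),
      ι (p + q - 1) n (br p q X Y) ξ
        = gcast K Ξ (show n + q + p - 1 = n + (p + q - 1) by ring)
            (LL ι d p (n + q) X (ι q n Y ξ))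
          - ((-1 : K) ^ ((p - 1) * q)) •
              gcast K Ξ (show n + p - 1 + q = n + (p + q - 1) by ring)
                (ι q (n + p - 1) Y (LL ι d p n X ξ))) :
    ∀ (p q n : ℤ) (X : Θ p) (Y : Θ q) (ξ : Ξ n),
      LL ι d (p + q - 1) n (br p q X Y) ξ
        = gcast K Ξ (show n + q - 1 + p - 1 = n + (p + q - 1) - 1 by ring)
            (LL ι d p (n + q - 1) X (LL ι d q n Y ξ))
          - ((-1 : K) ^ ((p - 1) * (q - 1))) •
              gcast K Ξ (show n + p - 1 + q - 1 = n + (p + q - 1) - 1 by ring)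
                (LL ι d q (n + p - 1) Y (LL ι d p n X ξ)) := by
  clear mul_assoc mul_gcomm one_mul br_skew br_jacobi leibniz ι_mul ι_one
  intro p q n X Y ξ
  have dgc : ∀ {m n' : ℤ} (h : m = n') (x : Ξ m),
      d n' (gcast K Ξ h x) = gcast K Ξ (congrArg (· - 1) h) (d m x) := by
    intro m n' h x; subst h; rfl
  have ιgc : ∀ (p' : ℤ) (Z : Θ p') {m n' : ℤ} (h : m = n') (x : Ξ m),
      ι p' n' Z (gcast K Ξ h x) = gcast K Ξ (congrArg (· + p') h) (ι p' m Z x) := by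
    intro p' Z m n' h x; subst h; rfl
  have LLap : ∀ (p' n' : ℤ) (Z : Θ p') (x : Ξ n'),
      LL ι d p' n' Z x
        = gcast K Ξ (show n' - 1 + p' = n' + p' - 1 by ring) (ι p' (n' - 1) Z (d n' x))
          - ((-1 : K) ^ p') • d (n' + p') (ι p' n' Z x) := fun _ _ _ _ => rfl
  have dd : ∀ (m : ℤ) (x : Ξ m), d (m - 1) (d m x) = 0 := by
    intro m x
    simpa using LinearMap.ext_iff.mp (d_sq m) x
  simp only [LLap, ι_br, map_sub, map_add, map_smul, dgc, ιgc, gcast_gcast', dd,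
    map_zero, smul_zero, sub_zero, zero_sub, smul_sub, smul_smul, smul_neg, neg_sub,
    map_neg, neg_neg]
  rcases Int.even_or_odd p with hp | hp <;>
  rcases Int.even_or_odd q with hq | hq <;>
    [(have hp' : Even p := hp; have hq' : Even q := hq);
     (have hp' : Even p := hp; have hq' : ¬ Even q := Int.not_even_iff_odd.mpr hq);
     (have hp' : ¬ Even p := Int.not_even_iff_odd.mpr hp; have hq' : Even q := hq);
     (have hp' : ¬ Even p := Int.not_even_iff_odd.mpr hp;
      have hq' : ¬ Even q := Int.not_even_iff_odd.mpr hq)] <;>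
  simp only [neg_one_zpow_ite, Int.even_add, Int.even_sub, Int.even_mul, hp', hq',
    Int.not_even_one, iff_true, iff_false, not_true, not_false_iff, if_true, if_false,
    eq_self_iff_true, true_or, or_true, false_or, or_false, not_not,
    one_smul, neg_smul, one_mul, mul_one, neg_mul, mul_neg, neg_neg, neg_one_mul] <;>
  module
end
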